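/- arXiv:2411.14559 — 7 statements merged into one kernel-verified Lean document; each statement's English description precedes it below -/
import Mathlib

section
/- Let Σ be a unary signature and let E and F be GTESs over Σ, with W = ST(E ∪ F). Then ↔*_{E∪F} ⊆ ↔*_E ∪ ↔*_F if and only if for every p ∈ W, the ↔*_{E∪F}-class of p equals the ↔*_E-class of p or the ↔*_{E∪F}-class of p equals the ↔*_F-class of p. -/
inductive GTerm (S : Type) (ar : S → ℕ) : Type
  | node (σ : S) (args : Fin (ar σ) → GTerm S ar) : GTerm S ar

/-- The congruence on the ground term algebra generated by a set of equations `E`: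
the smallest equivalence relation containing `E` and compatible with all operations. -/
inductive EqCong {S : Type} {ar : S → ℕ} (E : Set (GTerm S ar × GTerm S ar)) :
    GTerm S ar → GTerm S ar → Prop
  | base {s t : GTerm S ar} : (s, t) ∈ E → EqCong E s t
  | refl (t : GTerm S ar) : EqCong E t t
  | symm {s t : GTerm S ar} : EqCong E s t → EqCong E t s
  | trans {s t u : GTerm S ar} : EqCong E s t → EqCong E t u → EqCong E s u
  | lift {σ : S} {f g : Fin (ar σ) → GTerm S ar} :
      (∀ i, EqCong E (f i) (g i)) → EqCong E (GTerm.node σ f) (GTerm.node σ g)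

/-- A congruence on the ground term algebra: an equivalence relation compatible
with all operations. -/
def IsTermCongruence {S : Type} {ar : S → ℕ} (r : GTerm S ar → GTerm S ar → Prop) : Prop :=
  Equivalence r ∧
    ∀ (σ : S) (f g : Fin (ar σ) → GTerm S ar),
      (∀ i, r (f i) (g i)) → r (GTerm.node σ f) (GTerm.node σ g)

/-- `Subterm s t` : `s` is a subterm of `t`. -/
inductive Subterm {S : Type} {ar : S → ℕ} : GTerm S ar → GTerm S ar → Prop
  | refl (t : GTerm S ar) : Subterm t t
  | node {s : GTerm S ar} {σ : S} {f : Fin (ar σ) → GTerm S ar} (i : Fin (ar σ)) :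
      Subterm s (f i) → Subterm s (GTerm.node σ f)

/-- `ST E` : the set of all subterms of sides of equations of `E`. -/
def STSet {S : Type} {ar : S → ℕ} (E : Set (GTerm S ar × GTerm S ar)) : Set (GTerm S ar) :=
  {t | ∃ p ∈ E, Subterm t p.1 ∨ Subterm t p.2}

/-- The `Θ⟨G⟩`-class of `t` inside `W`. -/
def thCls {S : Type} {ar : S → ℕ} (G : Set (GTerm S ar × GTerm S ar))
    (W : Set (GTerm S ar)) (t : GTerm S ar) : Set (GTerm S ar) :=
  {u | u ∈ W ∧ EqCong G t u}

/-- `Θ⟨G⟩` as a set of pairs: the restriction of the generated congruence to `W × W`. -/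
def Theta {S : Type} {ar : S → ℕ} (G : Set (GTerm S ar × GTerm S ar))
    (W : Set (GTerm S ar)) : Set (GTerm S ar × GTerm S ar) :=
  {p | p.1 ∈ W ∧ p.2 ∈ W ∧ EqCong G p.1 p.2}

/-- `C⟨G⟩` : the set of `Θ⟨G⟩`-classes of elements of `W`, viewed as new constants. -/
def CCl {S : Type} {ar : S → ℕ} (G : Set (GTerm S ar × GTerm S ar))
    (W : Set (GTerm S ar)) : Set (Set (GTerm S ar)) :=
  {A | ∃ t ∈ W, A = thCls G W t}

/-- Terms over the signature extended with a type `C` of new constants. -/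
inductive XTerm (S : Type) (ar : S → ℕ) (C : Type) : Type
  | const (c : C) : XTerm S ar C
  | node (σ : S) (args : Fin (ar σ) → XTerm S ar C) : XTerm S ar C

abbrev XRule (S : Type) (ar : S → ℕ) (C : Type) : Type :=
  XTerm S ar C × XTerm S ar C

/-- Embedding of ground terms over `Σ` into the extended terms. -/
def GTerm.toX {S : Type} {ar : S → ℕ} {C : Type} : GTerm S ar → XTerm S ar C
  | .node σ f => .node σ (fun i => (f i).toX)

/-- The GTRS `R⟨G⟩` (relative to the subterm set `W`): its rules are exactly
`σ(t₁/Θ⟨G⟩, …, t_m/Θ⟨G⟩) → σ(t₁,…,t_m)/Θ⟨G⟩` for `σ(t₁,…,t_m) ∈ W`. -/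
def RRsys {S : Type} {ar : S → ℕ} (G : Set (GTerm S ar × GTerm S ar))
    (W : Set (GTerm S ar)) : Set (XRule S ar (Set (GTerm S ar))) :=
  {r | ∃ (σ : S) (ts : Fin (ar σ) → GTerm S ar),
      GTerm.node σ ts ∈ W ∧
      r = (XTerm.node σ (fun i => XTerm.const (thCls G W (ts i))),
           XTerm.const (thCls G W (GTerm.node σ ts)))}

/-- One-step rewriting by a GTRS `R`. -/
inductive Rew {S : Type} {ar : S → ℕ} {C : Type} (R : Set (XRule S ar C)) :
    XTerm S ar C → XTerm S ar C → Prop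
  | rule {l r : XTerm S ar C} : (l, r) ∈ R → Rew R l r
  | node {σ : S} {f g : Fin (ar σ) → XTerm S ar C} (i : Fin (ar σ)) :
      Rew R (f i) (g i) → (∀ j, j ≠ i → f j = g j) →
      Rew R (XTerm.node σ f) (XTerm.node σ g)

/-- `→*_R` : reflexive–transitive closure of one-step rewriting. -/
def RewStar {S : Type} {ar : S → ℕ} {C : Type} (R : Set (XRule S ar C)) :
    XTerm S ar C → XTerm S ar C → Prop :=
  Relation.ReflTransGen (Rew R)

/-- A GTRS is total (w.r.t. a set `Cst` of constants) if every `σ(a₁,…,a_m)` with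
`a₁,…,a_m ∈ Cst` is the left-hand side of some rule. -/
def TotalR {S : Type} {ar : S → ℕ} (R : Set (XRule S ar (Set (GTerm S ar))))
    (Cst : Set (Set (GTerm S ar))) : Prop :=
  ∀ (σ : S) (av : Fin (ar σ) → Set (GTerm S ar)), (∀ i, av i ∈ Cst) →
    ∃ rhs, (XTerm.node σ (fun i => XTerm.const (av i)), rhs) ∈ R

/-- An extended term containing no new constants, i.e. a ground term over `Σ`. -/
def IsGroundX {S : Type} {ar : S → ℕ} {C : Type} (t : XTerm S ar C) : Prop :=
  ∃ s : GTerm S ar, GTerm.toX s = t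

/-- `ProperExt b t` : `t = δ[b]` for some one-hole context `δ` over `Σ`
different from the hole itself. -/
inductive ProperExt {S : Type} {ar : S → ℕ} {C : Type} (b : XTerm S ar C) :
    XTerm S ar C → Prop
  | base {σ : S} {f : Fin (ar σ) → XTerm S ar C} (i : Fin (ar σ)) :
      f i = b → (∀ j, j ≠ i → IsGroundX (f j)) → ProperExt b (XTerm.node σ f)
  | step {σ : S} {f : Fin (ar σ) → XTerm S ar C} (i : Fin (ar σ)) :
      ProperExt b (f i) → (∀ j, j ≠ i → IsGroundX (f j)) → ProperExt b (XTerm.node σ f)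

/-- `R` reaches the constant `a` from a proper extension of the constant `b`. -/
def ReachesPE {S : Type} {ar : S → ℕ} (R : Set (XRule S ar (Set (GTerm S ar))))
    (a b : Set (GTerm S ar)) : Prop :=
  ∃ t, ProperExt (XTerm.const b) t ∧ RewStar R t (XTerm.const a)

/-- The arc relation `A[E;F]` of the auxiliary directed graph: `(a,b)` is an arc iff some
rule `σ(a₁,…,a_m) → a` of `R` has `b = aᵢ` for some `i`. -/
def AuxArc {S : Type} {ar : S → ℕ} (R : Set (XRule S ar (Set (GTerm S ar))))
    (a b : Set (GTerm S ar)) : Prop :=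
  ∃ (σ : S) (av : Fin (ar σ) → Set (GTerm S ar)) (i : Fin (ar σ)),
    (XTerm.node σ (fun j => XTerm.const (av j)), XTerm.const a) ∈ R ∧ av i = b

/-- `R1` keeps up with `Rall` writing the constant `a`. -/
def KeepsUp {S : Type} {ar : S → ℕ}
    (R1 Rall : Set (XRule S ar (Set (GTerm S ar))))
    (C1 : Set (Set (GTerm S ar))) (a : Set (GTerm S ar)) : Prop :=
  ∀ (σ : S) (av : Fin (ar σ) → Set (GTerm S ar)),
    (XTerm.node σ (fun i => XTerm.const (av i)), XTerm.const a) ∈ Rall →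
    ∀ bv : Fin (ar σ) → Set (GTerm S ar),
      (∀ i, bv i ∈ C1) → (∀ i, bv i ⊆ av i) →
      ∃ rhs, (XTerm.node σ (fun i => XTerm.const (bv i)), rhs) ∈ R1

/-- `R1` (with constant set `C1`) simulates `Rall` (with constant set `Call`) on `a`. -/
def SimulatesOn {S : Type} {ar : S → ℕ}
    (R1 Rall : Set (XRule S ar (Set (GTerm S ar))))
    (C1 Call : Set (Set (GTerm S ar))) (a : Set (GTerm S ar)) : Prop :=
  a ∈ C1 ∧ ∀ b ∈ Call, ReachesPE Rall a b → KeepsUp R1 Rall C1 b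

/-- `R⟨E,F⟩` and `R⟨F,E⟩` together simulate `R⟨E∪F,∅⟩`. -/
def TogetherSim {S : Type} {ar : S → ℕ}
    (E F : Set (GTerm S ar × GTerm S ar)) : Prop :=
  ∀ a ∈ CCl (E ∪ F) (STSet (E ∪ F)),
    SimulatesOn (RRsys E (STSet (E ∪ F))) (RRsys (E ∪ F) (STSet (E ∪ F)))
      (CCl E (STSet (E ∪ F))) (CCl (E ∪ F) (STSet (E ∪ F))) a ∨
    SimulatesOn (RRsys F (STSet (E ∪ F))) (RRsys (E ∪ F) (STSet (E ∪ F)))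
      (CCl F (STSet (E ∪ F))) (CCl (E ∪ F) (STSet (E ∪ F))) a

/-!
In a unary signature a one-hole context is a word `w` of unary symbols, and every
`↔*_G`-proof between distinct terms can be normalised to a single "bridge":
`s = w[p]`, `t = w[q]` with `p ↔*_G m ↔*_G q` for some `m ∈ ST(G)`. Two bridges
`w₁[p₁] ↔ w₁[q₁] = w₂[p₂] ↔ w₂[q₂]` compose because one of `w₁`, `w₂` is a prefix
of the other, so the shorter context can be kept and the difference absorbed into the
congruence below it. Hence if every `↔*_{E∪F}`-class of a term of `W` is an `E`- or an
`F`-class, the bridge through `m ∈ W` is already an `E`- or an `F`-proof. The converse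
holds for any three equivalences `r₁, r₂ ≤ r` with `r ⊆ r₁ ∪ r₂`.
-/

theorem Equivalence.setOf_eq_or_setOf_eq_of_forall_or {α : Type*} {r r₁ r₂ : α → α → Prop}
    (hr : Equivalence r) (hr₁ : Equivalence r₁) (hr₂ : Equivalence r₂) (h₁ : r₁ ≤ r)
    (h₂ : r₂ ≤ r) (hsplit : ∀ s t, r s t → r₁ s t ∨ r₂ s t) (p : α) :
    {s | r p s} = {s | r₁ p s} ∨ {s | r p s} = {s | r₂ p s} := by
  by_contra! hne
  obtain ⟨hne₁, hne₂⟩ := hne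
  obtain ⟨s, hps, hps₁⟩ : ∃ s, r p s ∧ ¬ r₁ p s := by
    by_contra! hsub
    exact hne₁ (Set.Subset.antisymm hsub fun s => h₁ p s)
  obtain ⟨t, hpt, hpt₂⟩ : ∃ t, r p t ∧ ¬ r₂ p t := by
    by_contra! hsub
    exact hne₂ (Set.Subset.antisymm hsub fun t => h₂ p t)
  have hps₂ : r₂ p s := (hsplit p s hps).resolve_left hps₁
  have hpt₁ : r₁ p t := (hsplit p t hpt).resolve_right hpt₂
  rcases hsplit s t (hr.trans (hr.symm hps) hpt) with hst | hst
  · exact hps₁ (hr₁.trans hpt₁ (hr₁.symm hst))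
  · exact hpt₂ (hr₂.trans hps₂ hst)

variable {S : Type} {ar : S → ℕ}

namespace EqCong

theorem equivalence (G : Set (GTerm S ar × GTerm S ar)) : Equivalence (EqCong G) :=
  ⟨.refl, .symm, .trans⟩

theorem mono {G H : Set (GTerm S ar × GTerm S ar)} (hGH : G ⊆ H) {s t : GTerm S ar}
    (h : EqCong G s t) : EqCong H s t := by
  induction h with
  | base h => exact .base (hGH h)
  | refl t => exact .refl t
  | symm _ ih => exact .symm ih
  | trans _ _ ih₁ ih₂ => exact .trans ih₁ ih₂
  | lift _ ih => exact .lift ih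

end EqCong

namespace GTerm

/-- `app [σ₁, …, σₖ] t = σ₁(⋯ σₖ(t) ⋯)`; a constant in the word discards everything below it. -/
def app (w : List S) (t : GTerm S ar) : GTerm S ar :=
  w.foldr (fun σ u => node σ fun _ => u) t

theorem app_cons (σ : S) (w : List S) (t : GTerm S ar) :
    app (σ :: w) t = node σ fun _ => app w t := rfl

theorem app_append (w v : List S) (t : GTerm S ar) : app (w ++ v) t = app w (app v t) := by
  induction w with
  | nil => rfl
  | cons σ w ih => simp only [List.cons_append, app_cons, ih]

theorem node_eq_app_singleton {σ : S} (hσ : ar σ = 1) (f : Fin (ar σ) → GTerm S ar) :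
    node σ f = app [σ] (f ⟨0, by omega⟩) :=
  congrArg _ (funext fun i => congrArg f (Fin.ext (by omega)))

theorem node_eq_node_of_ar_eq_zero {σ : S} (hσ : ar σ = 0) (f g : Fin (ar σ) → GTerm S ar) :
    node σ f = node σ g :=
  congrArg _ (funext fun i => absurd i.isLt (by omega))

theorem exists_append_of_app_eq_app {w₁ : List S} (hw₁ : ∀ σ ∈ w₁, ar σ = 1) :
    ∀ {w₂ : List S} {a b : GTerm S ar}, app w₁ a = app w₂ b →
      (∃ v, w₂ = w₁ ++ v ∧ a = app v b) ∨ (∃ v, w₁ = w₂ ++ v ∧ b = app v a) := by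
  induction w₁ with
  | nil => exact fun h => Or.inl ⟨_, rfl, h⟩
  | cons σ w₁ ih =>
    intro w₂ a b h
    cases w₂ with
    | nil => exact Or.inr ⟨_, rfl, h.symm⟩
    | cons τ w₂ =>
      rw [app_cons, app_cons] at h
      injection h with hστ hargs
      subst hστ
      have hσ : 0 < ar σ := by have := hw₁ σ List.mem_cons_self; omega
      have happ := congrFun (eq_of_heq hargs) ⟨0, hσ⟩
      rcases ih (fun τ hτ => hw₁ τ (List.mem_cons_of_mem _ hτ)) happ with
        ⟨v, rfl, rfl⟩ | ⟨v, rfl, rfl⟩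
      · exact Or.inl ⟨v, rfl, rfl⟩
      · exact Or.inr ⟨v, rfl, rfl⟩

end GTerm

open GTerm

theorem EqCong.app {G : Set (GTerm S ar × GTerm S ar)} (w : List S) {p q : GTerm S ar}
    (h : EqCong G p q) : EqCong G (app w p) (app w q) := by
  induction w with
  | nil => exact h
  | cons σ w ih => exact .lift fun _ => ih

def Bridged (G : Set (GTerm S ar × GTerm S ar)) (s t : GTerm S ar) : Prop :=
  ∃ w : List S, (∀ σ ∈ w, ar σ = 1) ∧ ∃ p q, s = app w p ∧ t = app w q ∧
    ∃ m ∈ STSet G, EqCong G m p ∧ EqCong G m q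

namespace Bridged

variable {G : Set (GTerm S ar × GTerm S ar)} {s t u : GTerm S ar}

theorem of_mem (h : (s, t) ∈ G) : Bridged G s t :=
  ⟨[], by simp, s, t, rfl, rfl, s, ⟨_, h, Or.inl (.refl s)⟩, .refl s, .base h⟩

theorem symm : Bridged G s t → Bridged G t s
  | ⟨w, hw, p, q, hs, ht, m, hm, hmp, hmq⟩ => ⟨w, hw, q, p, ht, hs, m, hm, hmq, hmp⟩

theorem app_singleton {σ : S} (hσ : ar σ = 1) :
    Bridged G s t → Bridged G (app [σ] s) (app [σ] t)
  | ⟨w, hw, p, q, hs, ht, hmpq⟩ =>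
    ⟨σ :: w, by simpa [hσ] using hw, p, q, by rw [hs]; rfl, by rw [ht]; rfl, hmpq⟩

theorem trans_of_prefix {w v : List S} (hw : ∀ σ ∈ w, ar σ = 1) {p₁ q₁ p₂ q₂ m₁ m₂ : GTerm S ar}
    (hm₁ : m₁ ∈ STSet G) (hmp₁ : EqCong G m₁ p₁) (hmq₁ : EqCong G m₁ q₁)
    (hmp₂ : EqCong G m₂ p₂) (hmq₂ : EqCong G m₂ q₂) (hq₁ : q₁ = app v p₂) :
    Bridged G (app w p₁) (app (w ++ v) q₂) := by
  have hq₁q₂ : EqCong G q₁ (app v q₂) := hq₁ ▸ (hmp₂.symm.trans hmq₂).app v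
  exact ⟨w, hw, p₁, app v q₂, rfl, app_append w v q₂, m₁, hm₁, hmp₁, hmq₁.trans hq₁q₂⟩

theorem trans (hst : Bridged G s t) (htu : Bridged G t u) : Bridged G s u := by
  obtain ⟨w₁, hw₁, p₁, q₁, rfl, ht₁, m₁, hm₁, hmp₁, hmq₁⟩ := hst
  obtain ⟨w₂, hw₂, p₂, q₂, ht₂, rfl, m₂, hm₂, hmp₂, hmq₂⟩ := htu
  rcases exists_append_of_app_eq_app hw₁ (ht₁.symm.trans ht₂) with
    ⟨v, rfl, hq₁⟩ | ⟨v, rfl, hp₂⟩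
  · exact trans_of_prefix hw₁ hm₁ hmp₁ hmq₁ hmp₂ hmq₂ hq₁
  · exact (trans_of_prefix hw₂ hm₂ hmq₂ hmp₂ hmq₁ hmp₁ hp₂).symm

end Bridged

theorem EqCong.eq_or_bridged (hunary : ∀ σ : S, ar σ ≤ 1) {G : Set (GTerm S ar × GTerm S ar)}
    {s t : GTerm S ar} (h : EqCong G s t) : s = t ∨ Bridged G s t := by
  induction h with
  | base h => exact Or.inr (.of_mem h)
  | refl => exact Or.inl rfl
  | symm _ ih => exact ih.imp Eq.symm Bridged.symm
  | trans _ _ ih₁ ih₂ =>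
    rcases ih₁ with rfl | h₁
    · exact ih₂
    rcases ih₂ with rfl | h₂
    · exact Or.inr h₁
    · exact Or.inr (h₁.trans h₂)
  | @lift σ f g _ ih =>
    rcases Nat.le_one_iff_eq_zero_or_eq_one.mp (hunary σ) with hσ | hσ
    · exact Or.inl (node_eq_node_of_ar_eq_zero hσ f g)
    · rw [node_eq_app_singleton hσ f, node_eq_app_singleton hσ g]
      exact (ih _).imp (congrArg _) (Bridged.app_singleton hσ)

theorem stmt_3_general {S : Type} {ar : S → ℕ}
    (hunary : ∀ σ : S, ar σ ≤ 1)
    (E F : Set (GTerm S ar × GTerm S ar)) :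
    (∀ s t : GTerm S ar, EqCong (E ∪ F) s t → (EqCong E s t ∨ EqCong F s t)) ↔
    (∀ p ∈ STSet (E ∪ F),
      {s | EqCong (E ∪ F) p s} = {s | EqCong E p s} ∨
      {s | EqCong (E ∪ F) p s} = {s | EqCong F p s}) := by
  constructor
  · intro hsplit p _
    exact (EqCong.equivalence _).setOf_eq_or_setOf_eq_of_forall_or (EqCong.equivalence E)
      (EqCong.equivalence F) (fun _ _ => EqCong.mono Set.subset_union_left)
      (fun _ _ => EqCong.mono Set.subset_union_right) hsplit p
  · intro hcls s t hst
    rcases hst.eq_or_bridged hunary with rfl | ⟨w, -, p, q, rfl, rfl, m, hm, hmp, hmq⟩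
    · exact Or.inl (.refl s)
    have of_class_eq {H} (hH : {x | EqCong (E ∪ F) m x} = {x | EqCong H m x}) :
        EqCong H (app w p) (app w q) :=
      (((Set.ext_iff.mp hH p).mp hmp).symm.trans ((Set.ext_iff.mp hH q).mp hmq)).app w
    exact (hcls m hm).imp of_class_eq of_class_eq

theorem stmt_3 {S : Type} [Fintype S] {ar : S → ℕ} (hconst : ∃ c : S, ar c = 0)
    (hunary : ∀ σ : S, ar σ ≤ 1)
    (E F : Set (GTerm S ar × GTerm S ar)) (hEfin : E.Finite) (hFfin : F.Finite) :
    (∀ s t : GTerm S ar, EqCong (E ∪ F) s t → (EqCong E s t ∨ EqCong F s t)) ↔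
    (∀ p ∈ STSet (E ∪ F),
      {s | EqCong (E ∪ F) p s} = {s | EqCong E p s} ∨
      {s | EqCong (E ∪ F) p s} = {s | EqCong F p s}) :=
  stmt_3_general hunary E F
end

section
/- Let E and F be GTESs over a signature Σ. If the GTRS R⟨E,F⟩ is total, then the GTRS R⟨E∪F,∅⟩ is total as well. -/
theorem Subterm.trans' {S : Type} {ar : S → ℕ} {a b c : GTerm S ar}
    (h1 : Subterm a b) (h2 : Subterm b c) : Subterm a c := by
  induction h2 with
  | refl => exact h1
  | node i _ ih => exact Subterm.node i ih

theorem EqCong.mono_s4 {S : Type} {ar : S → ℕ}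
    {E G : Set (GTerm S ar × GTerm S ar)} (hEG : E ⊆ G) {s t : GTerm S ar}
    (h : EqCong E s t) : EqCong G s t := by
  induction h with
  | base h => exact EqCong.base (hEG h)
  | refl t => exact EqCong.refl t
  | symm _ ih => exact ih.symm
  | trans _ _ ih1 ih2 => exact ih1.trans ih2
  | lift _ ih => exact EqCong.lift ih

theorem thCls_eq_of_cong {S : Type} {ar : S → ℕ}
    {G : Set (GTerm S ar × GTerm S ar)} {W : Set (GTerm S ar)} {s t : GTerm S ar}
    (h : EqCong G s t) : thCls G W s = thCls G W t := by
  ext u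
  constructor
  · rintro ⟨hu, hc⟩; exact ⟨hu, h.symm.trans hc⟩
  · rintro ⟨hu, hc⟩; exact ⟨hu, h.trans hc⟩

theorem subterm_mem_W {S : Type} {ar : S → ℕ}
    {G : Set (GTerm S ar × GTerm S ar)} {s t : GTerm S ar}
    (hst : Subterm s t) (ht : t ∈ STSet G) : s ∈ STSet G := by
  obtain ⟨p, hp, hc⟩ := ht
  exact ⟨p, hp, hc.imp (Subterm.trans' hst) (Subterm.trans' hst)⟩

theorem stmt_4 {S : Type} [Fintype S] {ar : S → ℕ} (hconst : ∃ c : S, ar c = 0)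
    (E F : Set (GTerm S ar × GTerm S ar)) (hEfin : E.Finite) (hFfin : F.Finite)
    (htot : TotalR (RRsys E (STSet (E ∪ F))) (CCl E (STSet (E ∪ F)))) :
    TotalR (RRsys (E ∪ F) (STSet (E ∪ F))) (CCl (E ∪ F) (STSet (E ∪ F))) := by
  intro σ av hav
  set W := STSet (E ∪ F) with hW
  -- choose representatives
  choose t ht hrep using hav
  -- apply totality of R⟨E,F⟩ to the E-classes of the representatives
  obtain ⟨rhs, hrule⟩ := htot σ (fun i => thCls E W (t i)) (fun i => ⟨t i, ht i, rfl⟩)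
  obtain ⟨σ', ts, hts, heq⟩ := hrule
  obtain ⟨hl, -⟩ := Prod.mk.injEq .. ▸ heq
  injection hl with hσ hargs
  subst hσ
  have hargs' : ∀ i, thCls E W (t i) = thCls E W (ts i) := by
    intro i
    have := congrFun (eq_of_heq hargs) i
    injection this
  -- each ts i is E-equivalent to t i, hence (E∪F)-equivalent
  have hcong : ∀ i, EqCong (E ∪ F) (t i) (ts i) := by
    intro i
    have htsW : ts i ∈ W := subterm_mem_W (Subterm.node i (Subterm.refl _)) hts
    have : ts i ∈ thCls E W (t i) := (hargs' i) ▸ ⟨htsW, EqCong.refl _⟩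
    exact EqCong.mono_s4 (Set.subset_union_left) this.2
  refine ⟨XTerm.const (thCls (E ∪ F) W (GTerm.node σ ts)), σ, ts, hts, ?_⟩
  have hfun : (fun i => XTerm.const (S := S) (ar := ar) (av i)) =
      fun i => XTerm.const (thCls (E ∪ F) W (ts i)) := by
    funext i
    rw [← thCls_eq_of_cong (hcong i), ← hrep i]
  rw [hfun]
end

section
/- Let E and F be GTESs over a signature Σ. If the GTRS R⟨E,F⟩ is total, then for every ground term s ∈ T_Σ there exists t ∈ W such that s →*_{R⟨E,F⟩} t/Θ⟨E,F⟩; moreover t/Θ⟨E,F⟩ is irreducible with respect to R⟨E,F⟩, hence t/Θ⟨E,F⟩ is an R⟨E,F⟩-normal form of s. -/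
lemma rewstar_update {S : Type} {ar : S → ℕ} {C : Type} (R : Set (XRule S ar C)) {σ : S}
    (f : Fin (ar σ) → XTerm S ar C) (i : Fin (ar σ)) {b : XTerm S ar C}
    (h : RewStar R (f i) b) :
    RewStar R (XTerm.node σ f) (XTerm.node σ (Function.update f i b)) := by
  induction h with
  | refl => simp [Function.update_eq_self]; exact Relation.ReflTransGen.refl
  | tail hsc hcb ih =>
    rename_i c b'
    refine ih.tail ?_
    have : Function.update f i b' = Function.update (Function.update f i c) i b' := by
      simp
    rw [this]
    refine Rew.node i ?_ ?_
    · simpa using hcb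
    · intro j hj; simp [Function.update_of_ne hj]

lemma rewstar_node {S : Type} {ar : S → ℕ} {C : Type} (R : Set (XRule S ar C)) {σ : S}
    {f g : Fin (ar σ) → XTerm S ar C} (h : ∀ i, RewStar R (f i) (g i)) :
    RewStar R (XTerm.node σ f) (XTerm.node σ g) := by
  have key : ∀ s : Finset (Fin (ar σ)), RewStar R (XTerm.node σ f)
      (XTerm.node σ (fun i => if i ∈ s then g i else f i)) := by
    intro s
    induction s using Finset.induction with
    | empty => simp; exact Relation.ReflTransGen.refl
    | @insert j s hj ih =>
      have h2 := rewstar_update R (fun i => if i ∈ s then g i else f i) j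
        (b := g j) (by simpa [hj] using h j)
      have heq : Function.update (fun i => if i ∈ s then g i else f i) j (g j)
          = fun i => if i ∈ insert j s then g i else f i := by
        funext i
        rcases eq_or_ne i j with rfl | hij
        · simp
        · simp [Function.update_of_ne hij, hij]
      rw [heq] at h2
      exact ih.trans h2
  have := key Finset.univ
  simpa using this

theorem stmt_6 {S : Type} [Fintype S] {ar : S → ℕ} (hconst : ∃ c : S, ar c = 0)
    (E F : Set (GTerm S ar × GTerm S ar)) (hEfin : E.Finite) (hFfin : F.Finite)
    (htot : TotalR (RRsys E (STSet (E ∪ F))) (CCl E (STSet (E ∪ F)))) :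
    ∀ s : GTerm S ar, ∃ t ∈ STSet (E ∪ F),
      RewStar (RRsys E (STSet (E ∪ F))) (GTerm.toX s)
        (XTerm.const (thCls E (STSet (E ∪ F)) t)) ∧
      ∀ u, ¬ Rew (RRsys E (STSet (E ∪ F)))
        (XTerm.const (thCls E (STSet (E ∪ F)) t)) u := by
  set W := STSet (E ∪ F) with hW
  have hirr : ∀ (c : Set (GTerm S ar)) u, ¬ Rew (RRsys E W) (XTerm.const c) u := by
    intro c u h
    cases h with
    | rule hr =>
      obtain ⟨σ, ts, _, heq⟩ := hr
      simp [Prod.ext_iff] at heq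
  intro s
  induction s with
  | node σ f ih =>
    choose t ht hrew _ using ih
    have hmem : ∀ i, thCls E W (t i) ∈ CCl E W := fun i => ⟨t i, ht i, rfl⟩
    obtain ⟨rhs, hrule⟩ := htot σ (fun i => thCls E W (t i)) hmem
    obtain ⟨σ', ts, htsW, heq⟩ := hrule
    have h1 : XTerm.node σ (fun i => XTerm.const (thCls E W (t i)))
        = XTerm.node σ' (fun i => XTerm.const (thCls E W (ts i))) :=
      congrArg Prod.fst heq
    have h2 : rhs = XTerm.const (thCls E W (GTerm.node σ' ts)) := congrArg Prod.snd heq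
    refine ⟨GTerm.node σ' ts, htsW, ?_, hirr _⟩
    have hstar : RewStar (RRsys E W) (GTerm.toX (GTerm.node σ f))
        (XTerm.node σ (fun i => XTerm.const (thCls E W (t i)))) := by
      show RewStar (RRsys E W) (XTerm.node σ (fun i => GTerm.toX (f i))) _
      exact rewstar_node _ hrew
    refine hstar.tail ?_
    rw [h1]
    exact Rew.rule ⟨σ', ts, htsW, rfl⟩
end

section
/- Let E and F be GTESs over a signature Σ such that the GTRSs R⟨E,F⟩ and R⟨F,E⟩ are both total, and let W = ST(E ∪ F). Then the following are equivalent: (1) for every t ∈ W, the ↔*_{E∪F}-class of t equals the ↔*_E-class of t or the ↔*_{E∪F}-class of t equals the ↔*_F-class of t; (2) for every t ∈ W, t/Θ⟨E∪F,∅⟩ = t/Θ⟨E,F⟩ or t/Θ⟨E∪F,∅⟩ = t/Θ⟨F,E⟩. -/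
lemma eqCong_mono {S : Type} {ar : S → ℕ} {G G' : Set (GTerm S ar × GTerm S ar)}
    (hGG : G ⊆ G') {s t : GTerm S ar} (h : EqCong G s t) : EqCong G' s t := by
  induction h with
  | base h => exact .base (hGG h)
  | refl t => exact .refl t
  | symm _ ih => exact .symm ih
  | trans _ _ ih1 ih2 => exact .trans ih1 ih2
  | lift _ ih => exact .lift ih

lemma total_reach {S : Type} {ar : S → ℕ} (G : Set (GTerm S ar × GTerm S ar))
    (W : Set (GTerm S ar)) (htot : TotalR (RRsys G W) (CCl G W)) :
    ∀ s : GTerm S ar, ∃ u ∈ W, EqCong G s u := by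
  intro s
  induction s with
  | node σ f ih =>
    choose u hu hcong using ih
    obtain ⟨rhs, hr⟩ := htot σ (fun i => thCls G W (u i)) (fun i => ⟨u i, hu i, rfl⟩)
    obtain ⟨σ', ts, hW, heq⟩ := hr
    have h1 := congrArg Prod.fst heq
    simp only at h1
    injection h1 with hσ hargs
    subst hσ
    have hargs' : (fun i => XTerm.const (C := Set (GTerm S ar)) (thCls G W (u i)))
        = fun i => XTerm.const (thCls G W (ts i)) := eq_of_heq hargs
    have hcls : ∀ i, thCls G W (u i) = thCls G W (ts i) := by
      intro i
      have := congrFun hargs' i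
      injection this
    have hts : ∀ i, EqCong G (ts i) (u i) := by
      intro i
      have hmem : u i ∈ thCls G W (ts i) := by
        rw [← hcls i]; exact ⟨hu i, .refl _⟩
      exact hmem.2
    exact ⟨GTerm.node σ ts, hW,
      .lift fun i => .trans (hcong i) (.symm (hts i))⟩

lemma class_eq_of_thCls {S : Type} {ar : S → ℕ}
    {G G' : Set (GTerm S ar × GTerm S ar)} {W : Set (GTerm S ar)}
    (hGG : G ⊆ G')
    (htot : TotalR (RRsys G W) (CCl G W))
    {t : GTerm S ar} (ht : t ∈ W)
    (hc : thCls G' W t = thCls G W t) :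
    {s | EqCong G' t s} = {s | EqCong G t s} := by
  ext s
  simp only [Set.mem_setOf_eq]
  constructor
  · intro hs
    obtain ⟨u, huW, hsu⟩ := total_reach G W htot s
    have hu : u ∈ thCls G' W t := ⟨huW, hs.trans (eqCong_mono hGG hsu)⟩
    rw [hc] at hu
    exact hu.2.trans hsu.symm
  · intro hs
    exact eqCong_mono hGG hs

theorem stmt_10 {S : Type} [Fintype S] {ar : S → ℕ} (hconst : ∃ c : S, ar c = 0)
    (E F : Set (GTerm S ar × GTerm S ar)) (hEfin : E.Finite) (hFfin : F.Finite)
    (htotE : TotalR (RRsys E (STSet (E ∪ F))) (CCl E (STSet (E ∪ F))))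
    (htotF : TotalR (RRsys F (STSet (E ∪ F))) (CCl F (STSet (E ∪ F)))) :
    (∀ t ∈ STSet (E ∪ F),
      {s | EqCong (E ∪ F) t s} = {s | EqCong E t s} ∨
      {s | EqCong (E ∪ F) t s} = {s | EqCong F t s}) ↔
    (∀ t ∈ STSet (E ∪ F),
      thCls (E ∪ F) (STSet (E ∪ F)) t = thCls E (STSet (E ∪ F)) t ∨
      thCls (E ∪ F) (STSet (E ∪ F)) t = thCls F (STSet (E ∪ F)) t) := by
  constructor
  · intro h t ht
    rcases h t ht with h1 | h1
    · left
      ext u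
      simp only [thCls, Set.mem_setOf_eq]
      rw [show EqCong (E ∪ F) t u ↔ EqCong E t u from Set.ext_iff.mp h1 u]
    · right
      ext u
      simp only [thCls, Set.mem_setOf_eq]
      rw [show EqCong (E ∪ F) t u ↔ EqCong F t u from Set.ext_iff.mp h1 u]
  · intro h t ht
    rcases h t ht with h1 | h1
    · exact Or.inl (class_eq_of_thCls Set.subset_union_left htotE ht h1)
    · exact Or.inr (class_eq_of_thCls Set.subset_union_right htotF ht h1)
end

section
/- Let Σ be a signature such that Σ_k ≠ ∅ for some k ≥ 2, and let E and F be GTESs over Σ such that neither the GTRS R⟨E,F⟩ nor the GTRS R⟨F,E⟩ is total. Then ↔*_{E∪F} ⊆ ↔*_E ∪ ↔*_F if and only if E ⊆ ↔*_F or F ⊆ ↔*_E. -/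
section Aux

variable {S : Type} {ar : S → ℕ}

lemma subterm_trans {a b c : GTerm S ar} (h1 : Subterm a b) (h2 : Subterm b c) :
    Subterm a c := by
  induction h2 with
  | refl => exact h1
  | node i _ ih => exact Subterm.node i ih

lemma child_mem_STSet {G : Set (GTerm S ar × GTerm S ar)} {σ : S}
    {f : Fin (ar σ) → GTerm S ar} (h : GTerm.node σ f ∈ STSet G) (i : Fin (ar σ)) :
    f i ∈ STSet G := by
  obtain ⟨p, hp, h'⟩ := h
  have hsub : Subterm (f i) (GTerm.node σ f) := Subterm.node i (Subterm.refl _)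
  exact ⟨p, hp, h'.imp (subterm_trans hsub) (subterm_trans hsub)⟩

/-- `x`'s shape is represented in `W`: some term of `W` with the same root has
argumentwise `G`-congruent arguments. -/
def RepIn (G : Set (GTerm S ar × GTerm S ar)) (W : Set (GTerm S ar)) :
    GTerm S ar → Prop
  | .node σ f => ∃ ts : Fin (ar σ) → GTerm S ar,
      GTerm.node σ ts ∈ W ∧ ∀ i, EqCong G (f i) (ts i)

lemma repIn_of_mem {G : Set (GTerm S ar × GTerm S ar)} {W : Set (GTerm S ar)}
    {s : GTerm S ar} (h : s ∈ W) : RepIn G W s := by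
  cases s with
  | node σ f => exact ⟨f, h, fun i => EqCong.refl _⟩

lemma repIn_iff {G : Set (GTerm S ar × GTerm S ar)} {W : Set (GTerm S ar)}
    (hG : ∀ p ∈ G, p.1 ∈ W ∧ p.2 ∈ W) {x y : GTerm S ar} (h : EqCong G x y) :
    RepIn G W x ↔ RepIn G W y := by
  induction h with
  | base hp =>
    exact ⟨fun _ => repIn_of_mem (hG _ hp).2, fun _ => repIn_of_mem (hG _ hp).1⟩
  | refl t => exact Iff.rfl
  | symm _ ih => exact ih.symm
  | trans _ _ ih1 ih2 => exact ih1.trans ih2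
  | @lift σ f g hfg _ =>
    constructor
    · rintro ⟨ts, hts, hargs⟩
      exact ⟨ts, hts, fun i => (hfg i).symm.trans (hargs i)⟩
    · rintro ⟨ts, hts, hargs⟩
      exact ⟨ts, hts, fun i => (hfg i).trans (hargs i)⟩

lemma repIn_of_touch {G : Set (GTerm S ar × GTerm S ar)} {W : Set (GTerm S ar)}
    (hG : ∀ p ∈ G, p.1 ∈ W ∧ p.2 ∈ W) {x w : GTerm S ar} (h : EqCong G x w)
    (hw : w ∈ W) : RepIn G W x :=
  (repIn_iff hG h).2 (repIn_of_mem hw)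

/-- Fundamental inversion: a congruence step either touches `W` (on the left side)
or decomposes into argumentwise congruences under the common root. -/
lemma eqcong_touch_or_decomp {G : Set (GTerm S ar × GTerm S ar)}
    {W : Set (GTerm S ar)} (hG : ∀ p ∈ G, p.1 ∈ W ∧ p.2 ∈ W)
    {x y : GTerm S ar} (h : EqCong G x y) :
    (∃ w ∈ W, EqCong G x w) ∨
    ∃ (σ : S) (f g : Fin (ar σ) → GTerm S ar),
      x = GTerm.node σ f ∧ y = GTerm.node σ g ∧ ∀ i, EqCong G (f i) (g i) := by
  induction h with
  | @base s t hp => exact Or.inl ⟨s, (hG _ hp).1, EqCong.refl _⟩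
  | refl t =>
    cases t with
    | node σ f => exact Or.inr ⟨σ, f, f, rfl, rfl, fun i => EqCong.refl _⟩
  | @symm s t h ih =>
    rcases ih with ⟨w, hw, hc⟩ | ⟨σ, f, g, rfl, rfl, hargs⟩
    · exact Or.inl ⟨w, hw, h.symm.trans hc⟩
    · exact Or.inr ⟨σ, g, f, rfl, rfl, fun i => (hargs i).symm⟩
  | @trans s t u h1 h2 ih1 ih2 =>
    rcases ih1 with ⟨w, hw, hc⟩ | ⟨σ, f, g, rfl, ht, hargs⟩
    · exact Or.inl ⟨w, hw, hc⟩
    · rcases ih2 with ⟨w, hw, hc⟩ | ⟨σ', f', g', ht', rfl, hargs'⟩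
      · exact Or.inl ⟨w, hw, h1.trans hc⟩
      · rw [ht] at ht'
        injection ht' with e he
        subst e
        have hgf : g = f' := eq_of_heq he
        subst hgf
        exact Or.inr ⟨σ, f, g', rfl, rfl, fun i => (hargs i).trans (hargs' i)⟩
  | @lift σ f g hfg _ => exact Or.inr ⟨σ, f, g, rfl, rfl, hfg⟩

/-- `x` avoids `W` under `G`: `x` is `G`-congruent to no term of `W`. -/
def AvoidsW (G : Set (GTerm S ar × GTerm S ar)) (W : Set (GTerm S ar))
    (x : GTerm S ar) : Prop :=
  ∀ w ∈ W, ¬ EqCong G x w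

lemma avoidsW_node {G : Set (GTerm S ar × GTerm S ar)}
    (hG : ∀ p ∈ G, p.1 ∈ STSet G' ∧ p.2 ∈ STSet G')
    {σ : S} {f : Fin (ar σ) → GTerm S ar} {i : Fin (ar σ)}
    (h : AvoidsW G (STSet G') (f i)) : AvoidsW G (STSet G') (GTerm.node σ f) := by
  intro u hu hc
  obtain ⟨ts, hts, hargs⟩ : RepIn G (STSet G') (GTerm.node σ f) :=
    repIn_of_touch hG hc hu
  exact h (ts i) (child_mem_STSet hts i) (hargs i)

lemma thCls_congr {G : Set (GTerm S ar × GTerm S ar)} {W : Set (GTerm S ar)}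
    {x y : GTerm S ar} (h : EqCong G x y) : thCls G W x = thCls G W y := by
  ext u
  exact ⟨fun ⟨hu, hc⟩ => ⟨hu, h.symm.trans hc⟩, fun ⟨hu, hc⟩ => ⟨hu, h.trans hc⟩⟩

/-- Non-totality of `R⟨G⟩` yields a term avoiding `W` under `G`. -/
lemma avoids_of_not_total {G : Set (GTerm S ar × GTerm S ar)}
    {W : Set (GTerm S ar)} (hG : ∀ p ∈ G, p.1 ∈ W ∧ p.2 ∈ W)
    (hnt : ¬ TotalR (RRsys G W) (CCl G W)) :
    ∃ g : GTerm S ar, AvoidsW G W g := by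
  unfold TotalR at hnt
  push_neg at hnt
  obtain ⟨σ, av, hav, hno⟩ := hnt
  choose w hwW hwcls using hav
  refine ⟨GTerm.node σ w, fun u hu hc => ?_⟩
  obtain ⟨ts, hts, hargs⟩ : RepIn G W (GTerm.node σ w) := repIn_of_touch hG hc hu
  refine hno (XTerm.const (thCls G W (GTerm.node σ ts))) ?_
  have hfun : (fun i => XTerm.const (S := S) (ar := ar) (av i)) =
      fun i => XTerm.const (thCls G W (ts i)) := by
    funext i
    rw [hwcls i, thCls_congr (hargs i)]
  rw [hfun]
  exact ⟨σ, ts, hts, rfl⟩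

/-- Congruence monotonicity through entailed equations. -/
lemma eqcong_mono_of {G H : Set (GTerm S ar × GTerm S ar)}
    (h : ∀ p ∈ G, EqCong H p.1 p.2) {s t : GTerm S ar} (hst : EqCong G s t) :
    EqCong H s t := by
  induction hst with
  | base hp => exact h _ hp
  | refl t => exact EqCong.refl t
  | symm _ ih => exact ih.symm
  | trans _ _ ih1 ih2 => exact ih1.trans ih2
  | lift _ ih => exact EqCong.lift ih

/-- `σ(x, y, y, …, y)` : `x` at position `i0`, `y` elsewhere. -/
def PairT (σ : S) (i0 : Fin (ar σ)) (x y : GTerm S ar) : GTerm S ar :=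
  GTerm.node σ (fun i => if i = i0 then x else y)

lemma pairT_cong {G : Set (GTerm S ar × GTerm S ar)} {σ : S} {i0 : Fin (ar σ)}
    {x x' y y' : GTerm S ar} (hx : EqCong G x x') (hy : EqCong G y y') :
    EqCong G (PairT σ i0 x y) (PairT σ i0 x' y') := by
  refine EqCong.lift fun i => ?_
  by_cases hi : i = i0 <;> simp only [hi, if_pos, if_neg, ite_true, ite_false] <;>
    assumption

lemma pairT_inv {G : Set (GTerm S ar × GTerm S ar)} {W : Set (GTerm S ar)}
    (hG : ∀ p ∈ G, p.1 ∈ W ∧ p.2 ∈ W) {σ : S} {i0 : Fin (ar σ)}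
    {x y x' y' : GTerm S ar} (hav : AvoidsW G W (PairT σ i0 x y))
    (h : EqCong G (PairT σ i0 x y) (PairT σ i0 x' y')) :
    ∀ i : Fin (ar σ),
      EqCong G (if i = i0 then x else y) (if i = i0 then x' else y') := by
  rcases eqcong_touch_or_decomp hG h with ⟨w, hw, hc⟩ | ⟨τ, f, g, h1, h2, hargs⟩
  · exact absurd hc (hav w hw)
  · unfold PairT at h1 h2
    injection h1 with e hf
    subst e
    have hf' : (fun i => if i = i0 then x else y) = f := eq_of_heq hf
    injection h2 with e2 hg
    have hg' : (fun i => if i = i0 then x' else y') = g := hg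
    subst hf'
    subst hg'
    exact hargs

end Aux

theorem stmt_11 {S : Type} [Fintype S] {ar : S → ℕ} (hconst : ∃ c : S, ar c = 0)
    (hbig : ∃ σ : S, 2 ≤ ar σ)
    (E F : Set (GTerm S ar × GTerm S ar)) (hEfin : E.Finite) (hFfin : F.Finite)
    (hntE : ¬ TotalR (RRsys E (STSet (E ∪ F))) (CCl E (STSet (E ∪ F))))
    (hntF : ¬ TotalR (RRsys F (STSet (E ∪ F))) (CCl F (STSet (E ∪ F)))) :
    (∀ s t : GTerm S ar, EqCong (E ∪ F) s t → (EqCong E s t ∨ EqCong F s t)) ↔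
    ((∀ p ∈ E, EqCong F p.1 p.2) ∨ (∀ p ∈ F, EqCong E p.1 p.2)) := by
  have hGE : ∀ p ∈ E, p.1 ∈ STSet (E ∪ F) ∧ p.2 ∈ STSet (E ∪ F) := fun p hp =>
    ⟨⟨p, Or.inl hp, Or.inl (Subterm.refl _)⟩, ⟨p, Or.inl hp, Or.inr (Subterm.refl _)⟩⟩
  have hGF : ∀ p ∈ F, p.1 ∈ STSet (E ∪ F) ∧ p.2 ∈ STSet (E ∪ F) := fun p hp =>
    ⟨⟨p, Or.inr hp, Or.inl (Subterm.refl _)⟩, ⟨p, Or.inr hp, Or.inr (Subterm.refl _)⟩⟩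
  constructor
  · intro hL
    by_contra hcon
    push_neg at hcon
    obtain ⟨⟨pE, hpE, hnF⟩, ⟨pF, hpF, hnE⟩⟩ := hcon
    obtain ⟨σb, hσb⟩ := hbig
    obtain ⟨gE, hgE⟩ := avoids_of_not_total hGE hntE
    obtain ⟨gF, hgF⟩ := avoids_of_not_total hGF hntF
    set i0 : Fin (ar σb) := ⟨0, by omega⟩ with hi0def
    set i1 : Fin (ar σb) := ⟨1, by omega⟩ with hi1def
    have hne : i1 ≠ i0 := by
      simp only [hi0def, hi1def, ne_eq, Fin.mk.injEq]
      norm_num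
    -- the poison term, avoiding W under both E and F
    set g : GTerm S ar := PairT σb i0 gE gF with hgdef
    have hgavE : AvoidsW E (STSet (E ∪ F)) g := by
      refine avoidsW_node hGE (i := i0) ?_
      simpa using hgE
    have hgavF : AvoidsW F (STSet (E ∪ F)) g := by
      refine avoidsW_node hGF (i := i1) ?_
      simpa [hne] using hgF
    set a : GTerm S ar := PairT σb i0 pE.1 g with hadef
    set a' : GTerm S ar := PairT σb i0 pE.2 g with ha'def
    set b : GTerm S ar := PairT σb i0 pF.1 g with hbdef
    set b' : GTerm S ar := PairT σb i0 pF.2 g with hb'def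
    have hava : AvoidsW F (STSet (E ∪ F)) a := by
      refine avoidsW_node hGF (i := i1) ?_
      simpa [hne] using hgavF
    have havb : AvoidsW E (STSet (E ∪ F)) b := by
      refine avoidsW_node hGE (i := i1) ?_
      simpa [hne] using hgavE
    set p : GTerm S ar := PairT σb i0 a b with hpdef
    set q : GTerm S ar := PairT σb i0 a' b' with hqdef
    have havpE : AvoidsW E (STSet (E ∪ F)) p := by
      refine avoidsW_node hGE (i := i1) ?_
      simpa [hne] using havb
    have havpF : AvoidsW F (STSet (E ∪ F)) p := by
      refine avoidsW_node hGF (i := i0) ?_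
      simpa using hava
    have hpq : EqCong (E ∪ F) p q := by
      refine pairT_cong (pairT_cong ?_ (EqCong.refl g)) (pairT_cong ?_ (EqCong.refl g))
      · exact EqCong.base (show (pE.1, pE.2) ∈ E ∪ F from Or.inl (by simpa using hpE))
      · exact EqCong.base (show (pF.1, pF.2) ∈ E ∪ F from Or.inr (by simpa using hpF))
    rcases hL p q hpq with hEpq | hFpq
    · have h1 := pairT_inv hGE havpE hEpq i1
      rw [if_neg hne, if_neg hne] at h1
      have h2 := pairT_inv hGE havb h1 i0
      rw [if_pos rfl, if_pos rfl] at h2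
      exact hnE h2
    · have h1 := pairT_inv hGF havpF hFpq i0
      rw [if_pos rfl, if_pos rfl] at h1
      have h2 := pairT_inv hGF hava h1 i0
      rw [if_pos rfl, if_pos rfl] at h2
      exact hnF h2
  · rintro (hE | hF) s t hst
    · refine Or.inr (eqcong_mono_of ?_ hst)
      rintro p (hp | hp)
      · exact hE p hp
      · exact EqCong.base (show (p.1, p.2) ∈ F from by simpa using hp)
    · refine Or.inl (eqcong_mono_of ?_ hst)
      rintro p (hp | hp)
      · exact EqCong.base (show (p.1, p.2) ∈ E from by simpa using hp)
      · exact hF p hp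
end

section
/- Let Σ be a signature such that Σ_k ≠ ∅ for some k ≥ 2, and let E and F be GTESs over Σ such that neither the GTRS R⟨E,F⟩ nor the GTRS R⟨F,E⟩ is total. Then ↔*_{E∪F} ⊆ ↔*_E ∪ ↔*_F if and only if E ⊆ Θ⟨F,E⟩ or F ⊆ Θ⟨E,F⟩. -/
/-!
Non-totality of `R⟨E,F⟩` yields a term `g₀ = σ(t₁,…,t_m)` that is not `E`-congruent at the root
to any term of `W`; then no term containing `g₀` is `E`-congruent to a term of `W`, so no equation of
`E` can ever be applied at or above a position carrying `g₀`. A term `κ(x, y, …)` with `g₀` inside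
`x` is therefore `E`-congruent only to terms `κ(x', y', …)` with `x ~ x'` and `y ~ y'`.
If both inclusions fail, pick `(p, q) ∈ E` with `p ≁_F q` and `(u, v) ∈ F` with `u ≁_E v`, and
a binary pairing `⟨x, y⟩ = κ(x, y, y, …)`. With `h = ⟨g_E, g_F⟩` the terms
`⟨⟨h, p⟩, ⟨h, u⟩⟩` and `⟨⟨h, q⟩, ⟨h, v⟩⟩` are `E ∪ F`-congruent; if they were `E`-congruent,
unpairing twice would give `u ~_E v`, and symmetrically for `F`.
-/

variable {S : Type} {ar : S → ℕ}

theorem Subterm.trans {r s t : GTerm S ar} (h₁ : Subterm r s) (h₂ : Subterm s t) :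
    Subterm r t := by
  induction h₂ with
  | refl => exact h₁
  | node i _ ih => exact .node i ih

section STSet

variable {G : Set (GTerm S ar × GTerm S ar)}

theorem mem_STSet_of_subterm {s t : GTerm S ar} (hst : Subterm s t) (ht : t ∈ STSet G) :
    s ∈ STSet G := by
  obtain ⟨p, hp, h⟩ := ht
  exact ⟨p, hp, h.imp hst.trans hst.trans⟩

theorem sides_mem_STSet {p : GTerm S ar × GTerm S ar} (hp : p ∈ G) :
    p.1 ∈ STSet G ∧ p.2 ∈ STSet G :=
  ⟨⟨p, hp, .inl (.refl _)⟩, ⟨p, hp, .inr (.refl _)⟩⟩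

end STSet

section EqCong

variable {G : Set (GTerm S ar × GTerm S ar)}

theorem EqCong.of_forall_eqCong {G' : Set (GTerm S ar × GTerm S ar)}
    (hG : ∀ p ∈ G, EqCong G' p.1 p.2) {s t : GTerm S ar} (h : EqCong G s t) :
    EqCong G' s t := by
  induction h with
  | base hp => exact hG _ hp
  | refl t => exact .refl t
  | symm _ ih => exact ih.symm
  | trans _ _ ih₁ ih₂ => exact ih₁.trans ih₂
  | lift _ ih => exact .lift ih

theorem EqCong.left_of_union {F : Set (GTerm S ar × GTerm S ar)}
    (hF : ∀ p ∈ F, EqCong G p.1 p.2) {s t : GTerm S ar} (h : EqCong (G ∪ F) s t) :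
    EqCong G s t :=
  h.of_forall_eqCong fun p hp => hp.elim (fun hp => .base hp) (hF p)

theorem EqCong.right_of_union {F : Set (GTerm S ar × GTerm S ar)}
    (hG : ∀ p ∈ G, EqCong F p.1 p.2) {s t : GTerm S ar} (h : EqCong (G ∪ F) s t) :
    EqCong F s t :=
  h.of_forall_eqCong fun p hp => hp.elim (hG p) (fun hp => .base hp)

theorem thCls_eq_of_eqCong {W : Set (GTerm S ar)} {s t : GTerm S ar} (h : EqCong G s t) :
    thCls G W s = thCls G W t := by
  ext u
  exact and_congr_right fun _ => ⟨h.symm.trans, h.trans⟩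

end EqCong

def ArgsEqCong (G : Set (GTerm S ar × GTerm S ar)) (s t : GTerm S ar) : Prop :=
  ∃ σ f g, s = GTerm.node σ f ∧ t = GTerm.node σ g ∧ ∀ i, EqCong G (f i) (g i)

/-- For `W = ST(E ∪ F)`, `¬ CongRootIn G W σ(t₁,…,t_m)` says that `R⟨G⟩` has no rule with left-hand
side `σ(t₁/Θ, …, t_m/Θ)`. -/
def CongRootIn (G : Set (GTerm S ar × GTerm S ar)) (W : Set (GTerm S ar)) : GTerm S ar → Prop
  | .node σ f => ∃ g, (∀ i, EqCong G (f i) (g i)) ∧ GTerm.node σ g ∈ W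

section Rigidity

variable {G : Set (GTerm S ar × GTerm S ar)} {W : Set (GTerm S ar)}

theorem ArgsEqCong.refl (t : GTerm S ar) : ArgsEqCong G t t := by
  cases t with
  | node σ f => exact ⟨σ, f, f, rfl, rfl, fun i => .refl _⟩

theorem ArgsEqCong.symm {s t : GTerm S ar} (h : ArgsEqCong G s t) : ArgsEqCong G t s := by
  obtain ⟨σ, f, g, rfl, rfl, hfg⟩ := h
  exact ⟨σ, g, f, rfl, rfl, fun i => (hfg i).symm⟩

theorem ArgsEqCong.trans {s t u : GTerm S ar} (h₁ : ArgsEqCong G s t) (h₂ : ArgsEqCong G t u) :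
    ArgsEqCong G s u := by
  obtain ⟨σ, f, g, rfl, rfl, hfg⟩ := h₁
  obtain ⟨_, _, h, ⟨⟩, rfl, hgh⟩ := h₂
  exact ⟨σ, f, h, rfl, rfl, fun i => (hfg i).trans (hgh i)⟩

theorem CongRootIn.of_argsEqCong {s t : GTerm S ar} (hst : ArgsEqCong G s t)
    (ht : CongRootIn G W t) : CongRootIn G W s := by
  obtain ⟨σ, f, g, rfl, rfl, hfg⟩ := hst
  obtain ⟨h, hgh, hW⟩ := ht
  exact ⟨h, fun i => (hfg i).trans (hgh i), hW⟩

theorem CongRootIn.of_mem {t : GTerm S ar} (ht : t ∈ W) : CongRootIn G W t := by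
  cases t with
  | node σ f => exact ⟨f, fun i => .refl _, ht⟩

variable (hGW : ∀ p ∈ G, p.1 ∈ W ∧ p.2 ∈ W)
include hGW

/-- A `G`-congruence either never applies an equation at the root, or does so through terms
that are congruent at the root to sides of equations, which lie in `W`. -/
theorem EqCong.argsEqCong_or_congRootIn {s t : GTerm S ar} (h : EqCong G s t) :
    ArgsEqCong G s t ∨ CongRootIn G W s ∧ CongRootIn G W t := by
  induction h with
  | base hp => exact .inr ⟨CongRootIn.of_mem (hGW _ hp).1, CongRootIn.of_mem (hGW _ hp).2⟩
  | refl t => exact .inl (.refl t)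
  | symm _ ih => exact ih.imp ArgsEqCong.symm And.symm
  | trans _ _ ih₁ ih₂ =>
    rcases ih₁ with h₁ | ⟨hs, ht⟩ <;> rcases ih₂ with h₂ | ⟨ht', hu⟩
    · exact .inl (h₁.trans h₂)
    · exact .inr ⟨.of_argsEqCong h₁ ht', hu⟩
    · exact .inr ⟨hs, .of_argsEqCong h₂.symm ht⟩
    · exact .inr ⟨hs, hu⟩
  | lift hfg => exact .inl ⟨_, _, _, rfl, rfl, hfg⟩

theorem EqCong.congRootIn_of_mem {s w : GTerm S ar} (h : EqCong G s w) (hw : w ∈ W) :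
    CongRootIn G W s :=
  (h.argsEqCong_or_congRootIn hGW).elim (fun hsw => .of_argsEqCong hsw (.of_mem hw))
    And.left

variable (hW : ∀ {s t}, Subterm s t → t ∈ W → s ∈ W)
include hW

theorem not_eqCong_mem_of_subterm {g₀ s w : GTerm S ar} (hg₀ : ¬ CongRootIn G W g₀)
    (hs : Subterm g₀ s) (hw : w ∈ W) : ¬ EqCong G s w := by
  induction hs generalizing w with
  | refl => exact fun h => hg₀ (h.congRootIn_of_mem hGW hw)
  | node i _ ih =>
    intro h
    obtain ⟨g, hfg, hg⟩ := h.congRootIn_of_mem hGW hw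
    exact ih (hW (.node i (.refl _)) hg) (hfg i)

theorem EqCong.argsEqCong_of_subterm {g₀ t : GTerm S ar} {σ : S} {f : Fin (ar σ) → GTerm S ar}
    {i : Fin (ar σ)} (hg₀ : ¬ CongRootIn G W g₀) (hf : Subterm g₀ (f i))
    (h : EqCong G (.node σ f) t) : ArgsEqCong G (.node σ f) t := by
  refine (h.argsEqCong_or_congRootIn hGW).resolve_right fun ⟨⟨g, hfg, hg⟩, _⟩ => ?_
  exact not_eqCong_mem_of_subterm hGW hW hg₀ hf (hW (.node i (.refl _)) hg) (hfg i)

end Rigidity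

theorem exists_not_congRootIn_of_not_totalR {G : Set (GTerm S ar × GTerm S ar)}
    {W : Set (GTerm S ar)} (h : ¬ TotalR (RRsys G W) (CCl G W)) :
    ∃ g₀, ¬ CongRootIn G W g₀ := by
  simp only [TotalR, not_forall, not_exists] at h
  obtain ⟨σ, a, ha, hno⟩ := h
  choose ts _ hts using ha
  refine ⟨.node σ ts, fun ⟨g, htg, hg⟩ => hno (.const (thCls G W (.node σ g))) ⟨σ, g, hg, ?_⟩⟩
  simp only [hts, thCls_eq_of_eqCong (htg _)]

def GTerm.pair (κ : S) (x y : GTerm S ar) : GTerm S ar :=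
  .node κ fun j => if (j : ℕ) = 0 then x else y

section Pair

variable {κ : S} {G : Set (GTerm S ar × GTerm S ar)}

theorem subterm_pair_left (hκ : 2 ≤ ar κ) (x y : GTerm S ar) : Subterm x (GTerm.pair κ x y) :=
  .node ⟨0, by omega⟩ (by simpa using .refl x)

theorem subterm_pair_right (hκ : 2 ≤ ar κ) (x y : GTerm S ar) : Subterm y (GTerm.pair κ x y) :=
  .node ⟨1, hκ⟩ (by simpa using .refl y)

theorem EqCong.pair {x y x' y' : GTerm S ar} (hx : EqCong G x x') (hy : EqCong G y y') :
    EqCong G (GTerm.pair κ x y) (GTerm.pair κ x' y') :=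
  .lift fun j => by split_ifs <;> assumption

theorem eqCong_pair_iff {W : Set (GTerm S ar)} (hκ : 2 ≤ ar κ)
    (hGW : ∀ p ∈ G, p.1 ∈ W ∧ p.2 ∈ W) (hW : ∀ {s t}, Subterm s t → t ∈ W → s ∈ W)
    {g₀ x y x' y' : GTerm S ar} (hg₀ : ¬ CongRootIn G W g₀) (hx : Subterm g₀ x) :
    EqCong G (GTerm.pair κ x y) (GTerm.pair κ x' y') ↔ EqCong G x x' ∧ EqCong G y y' := by
  refine ⟨fun h => ?_, fun h => h.1.pair h.2⟩
  obtain ⟨_, f, g, ⟨⟩, ⟨⟩, hfg⟩ :=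
    h.argsEqCong_of_subterm hGW hW (i := ⟨0, by omega⟩) hg₀ (by simpa [GTerm.pair] using hx)
  exact ⟨by simpa using hfg ⟨0, by omega⟩, by simpa using hfg ⟨1, hκ⟩⟩

end Pair

theorem stmt_12_general {S : Type} {ar : S → ℕ}
    (hbig : ∃ σ : S, 2 ≤ ar σ)
    (E F : Set (GTerm S ar × GTerm S ar))
    (hntE : ¬ TotalR (RRsys E (STSet (E ∪ F))) (CCl E (STSet (E ∪ F))))
    (hntF : ¬ TotalR (RRsys F (STSet (E ∪ F))) (CCl F (STSet (E ∪ F)))) :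
    (∀ s t : GTerm S ar, EqCong (E ∪ F) s t → (EqCong E s t ∨ EqCong F s t)) ↔
    (E ⊆ Theta F (STSet (E ∪ F)) ∨ F ⊆ Theta E (STSet (E ∪ F))) := by
  have hW {s t : GTerm S ar} : Subterm s t → t ∈ STSet (E ∪ F) → s ∈ STSet (E ∪ F) :=
    mem_STSet_of_subterm
  have hEW (p) (hp : p ∈ E) := sides_mem_STSet (G := E ∪ F) (.inl hp)
  have hFW (p) (hp : p ∈ F) := sides_mem_STSet (G := E ∪ F) (.inr hp)
  refine ⟨fun H => ?_, ?_⟩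
  · by_contra! ⟨hE, hF⟩
    obtain ⟨⟨p, q⟩, hpq, hpqF⟩ := Set.not_subset.mp hE
    obtain ⟨⟨u, v⟩, huv, huvE⟩ := Set.not_subset.mp hF
    obtain ⟨gE, hgE⟩ := exists_not_congRootIn_of_not_totalR hntE
    obtain ⟨gF, hgF⟩ := exists_not_congRootIn_of_not_totalR hntF
    obtain ⟨κ, hκ⟩ := hbig
    let h := GTerm.pair κ gE gF
    have hgEh : Subterm gE h := subterm_pair_left hκ _ _
    have hgFh : Subterm gF h := subterm_pair_right hκ _ _
    have hh {x : GTerm S ar} : Subterm h (GTerm.pair κ h x) := subterm_pair_left hκ _ _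
    have hK : EqCong (E ∪ F) (.pair κ (.pair κ h p) (.pair κ h u))
        (.pair κ (.pair κ h q) (.pair κ h v)) :=
      .pair (.pair (.refl h) (.base (Or.inl hpq))) (.pair (.refl h) (.base (Or.inr huv)))
    rcases H _ _ hK with hK | hK
    · obtain ⟨-, hK⟩ := (eqCong_pair_iff hκ hEW hW hgE (hgEh.trans hh)).1 hK
      exact huvE ⟨(hFW _ huv).1, (hFW _ huv).2, ((eqCong_pair_iff hκ hEW hW hgE hgEh).1 hK).2⟩
    · obtain ⟨hK, -⟩ := (eqCong_pair_iff hκ hFW hW hgF (hgFh.trans hh)).1 hK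
      exact hpqF ⟨(hEW _ hpq).1, (hEW _ hpq).2, ((eqCong_pair_iff hκ hFW hW hgF hgFh).1 hK).2⟩
  · rintro (hE | hF) s t h
    · exact .inr (h.right_of_union fun p hp => (hE hp).2.2)
    · exact .inl (h.left_of_union fun p hp => (hF hp).2.2)

theorem stmt_12 {S : Type} [Fintype S] {ar : S → ℕ} (hconst : ∃ c : S, ar c = 0)
    (hbig : ∃ σ : S, 2 ≤ ar σ)
    (E F : Set (GTerm S ar × GTerm S ar)) (hEfin : E.Finite) (hFfin : F.Finite)
    (hntE : ¬ TotalR (RRsys E (STSet (E ∪ F))) (CCl E (STSet (E ∪ F))))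
    (hntF : ¬ TotalR (RRsys F (STSet (E ∪ F))) (CCl F (STSet (E ∪ F)))) :
    (∀ s t : GTerm S ar, EqCong (E ∪ F) s t → (EqCong E s t ∨ EqCong F s t)) ↔
    (E ⊆ Theta F (STSet (E ∪ F)) ∨ F ⊆ Theta E (STSet (E ∪ F))) :=
  stmt_12_general hbig E F hntE hntF
end

section
/- Let E and F be GTESs over a signature Σ, and suppose that R⟨E∪F,∅⟩ reaches a constant a ∈ C⟨E∪F,∅⟩ from a proper extension of a constant b ∈ C⟨E∪F,∅⟩. Then there exist an integer k with 1 ≤ k ≤ |C⟨E∪F,∅⟩| and, for each j = 1,…,k, a rule σ_j(a_{j1},…,a_{j m_j}) → a_j of R⟨E∪F,∅⟩ with m_j ≥ 1 and an index i_j ∈ {1,…,m_j}, such that: b = a_{1 i_1}; a_j = a_{(j+1) i_{j+1}} for each j = 1,…,k−1; b ∉ {a_1,…,a_{k−1}}; a_i ≠ a_j for all 1 ≤ i < j ≤ k−1; and a = a_k. -/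
/-! Every rule of `R⟨E∪F,∅⟩` is flat, `σ(a₁,…,a_m) → a`, so a reduction of a term `δ[b]` to a
constant can be read bottom-up along the path from the hole to the root: each rule applied on the
way turns a constant `a_{j,i}` into the constant `a_j`. This gives a chain of arcs of the auxiliary
graph from `b` to `a`; cutting it at the first visit of each constant makes all but its last
vertex distinct, and there are only finitely many constants since `ST(E ∪ F)` is finite. -/

section Finiteness

variable {S : Type} {ar : S → ℕ}

lemma finite_setOf_subterm (t : GTerm S ar) : {s : GTerm S ar | Subterm s t}.Finite := by
  induction t with
  | node σ f ih =>
    refine ((Set.finite_iUnion ih).insert (GTerm.node σ f)).subset ?_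
    rintro s (_ | ⟨i, hs⟩)
    · exact Set.mem_insert _ _
    · exact Set.mem_insert_of_mem _ (Set.mem_iUnion.2 ⟨i, hs⟩)

lemma finite_STSet {G : Set (GTerm S ar × GTerm S ar)} (hG : G.Finite) : (STSet G).Finite := by
  refine (hG.biUnion fun p _ =>
    (finite_setOf_subterm p.1).union (finite_setOf_subterm p.2)).subset ?_
  rintro s ⟨p, hp, hs⟩
  exact Set.mem_biUnion hp hs

lemma finite_CCl (G : Set (GTerm S ar × GTerm S ar)) {W : Set (GTerm S ar)} (hW : W.Finite) :
    (CCl G W).Finite :=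
  (hW.image (thCls G W)).subset fun _ ⟨t, ht, hA⟩ => ⟨t, ht, hA.symm⟩

end Finiteness

section FlatRewriting

variable {S : Type} {ar : S → ℕ} {C : Type}

def IsFlat (R : Set (XRule S ar C)) : Prop :=
  ∀ l r, (l, r) ∈ R → ∃ (σ : S) (av : Fin (ar σ) → C) (c : C),
    l = XTerm.node σ (fun i => XTerm.const (av i)) ∧ r = XTerm.const c

lemma isFlat_RRsys (G : Set (GTerm S ar × GTerm S ar)) (W : Set (GTerm S ar)) :
    IsFlat (RRsys G W) := by
  rintro l r ⟨σ, ts, -, heq⟩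
  obtain ⟨hl, hr⟩ := Prod.ext_iff.1 heq
  exact ⟨σ, fun i => thCls G W (ts i), _, hl, hr⟩

lemma mem_CCl_of_mem_RRsys {G : Set (GTerm S ar × GTerm S ar)} {W : Set (GTerm S ar)}
    {l : XTerm S ar (Set (GTerm S ar))} {a : Set (GTerm S ar)}
    (h : (l, XTerm.const a) ∈ RRsys G W) : a ∈ CCl G W := by
  obtain ⟨σ, ts, hts, heq⟩ := h
  obtain ⟨-, ha⟩ := Prod.ext_iff.1 heq
  exact ⟨GTerm.node σ ts, hts, XTerm.const.inj ha⟩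

variable {R : Set (XRule S ar C)}

lemma IsFlat.not_rew_const (hR : IsFlat R) (c : C) (u : XTerm S ar C) :
    ¬ Rew R (XTerm.const c) u := by
  rintro ⟨hm⟩
  obtain ⟨σ, av, d, hl, -⟩ := hR _ _ hm
  cases hl

lemma IsFlat.eq_of_rewStar_const (hR : IsFlat R) {c d : C}
    (h : RewStar R (XTerm.const c) (XTerm.const d)) : c = d := by
  rcases h.cases_head with heq | ⟨u, hstep, -⟩
  · exact XTerm.const.inj heq
  · exact (hR.not_rew_const c u hstep).elim

lemma IsFlat.exists_rule_of_rewStar_node (hR : IsFlat R) {σ : S}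
    {f : Fin (ar σ) → XTerm S ar C} {a : C} (h : RewStar R (XTerm.node σ f) (XTerm.const a)) :
    ∃ av : Fin (ar σ) → C, (∀ i, RewStar R (f i) (XTerm.const (av i))) ∧
      (XTerm.node σ (fun i => XTerm.const (av i)), XTerm.const a) ∈ R := by
  generalize ht : XTerm.node σ f = t at h
  induction h using Relation.ReflTransGen.head_induction_on generalizing f with
  | refl => cases ht
  | head hstep hrest ih =>
    subst ht
    cases hstep with
    | rule hm =>
      obtain ⟨σ', av, c, hl, rfl⟩ := hR _ _ hm
      cases hl
      exact ⟨av, fun _ => .refl, hR.eq_of_rewStar_const hrest ▸ hm⟩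
    | node i hi hfg =>
      obtain ⟨av, hargs, hrule⟩ := ih rfl
      refine ⟨av, fun j => ?_, hrule⟩
      by_cases hji : j = i
      · subst hji
        exact (hargs j).head hi
      · exact hfg j hji ▸ hargs j

end FlatRewriting

lemma transGen_auxArc_of_properExt {S : Type} {ar : S → ℕ}
    {R : Set (XRule S ar (Set (GTerm S ar)))} (hR : IsFlat R) {b : Set (GTerm S ar)}
    {t : XTerm S ar (Set (GTerm S ar))} (hpe : ProperExt (XTerm.const b) t)
    {a : Set (GTerm S ar)} (h : RewStar R t (XTerm.const a)) :
    Relation.TransGen (flip (AuxArc R)) b a := by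
  induction hpe generalizing a with
  | base i hb =>
    obtain ⟨av, hargs, hrule⟩ := hR.exists_rule_of_rewStar_node h
    exact .single ⟨_, av, i, hrule, (hR.eq_of_rewStar_const (hb ▸ hargs i)).symm⟩
  | step i _ _ ih =>
    obtain ⟨av, hargs, hrule⟩ := hR.exists_rule_of_rewStar_node h
    exact .tail (ih (hargs i)) ⟨_, av, i, hrule, rfl⟩

theorem Relation.TransGen.exists_injOn_chain {α : Type*} {r : α → α → Prop} {a b : α}
    (h : Relation.TransGen r a b) :
    ∃ (k : ℕ) (c : ℕ → α), 0 < k ∧ c 0 = a ∧ c k = b ∧ (∀ j < k, r (c j) (c (j + 1))) ∧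
      Set.InjOn c (Set.Iio k) := by
  classical
  induction h with
  | @single y hay =>
    refine ⟨1, fun n => if n = 0 then a else y, one_pos, rfl, rfl, ?_, ?_⟩
    · intro j hj
      obtain rfl : j = 0 := by omega
      exact hay
    · intro i hi j hj _
      simp_all
  | @tail y z _ hyz ih =>
    obtain ⟨k, c, -, hc0, hck, hchain, hinj⟩ := ih
    -- cut the path at the first visit of its endpoint before appending the new arc
    have hex : ∃ m, c m = y := ⟨k, hck⟩
    set m := Nat.find hex
    have hmk : m ≤ k := Nat.find_min' hex hck
    have hcm : c m = y := Nat.find_spec hex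
    have hfirst : ∀ n < m, c n ≠ y := fun n hn => Nat.find_min hex hn
    refine ⟨m + 1, fun n => if n ≤ m then c n else z, m.succ_pos, by simpa using hc0,
      by simp, ?_, ?_⟩
    · intro j hj
      rcases Nat.lt_or_eq_of_le (Nat.lt_succ_iff.1 hj) with hjm | rfl
      · simpa [hjm.le, Nat.succ_le_of_lt hjm] using hchain j (by omega)
      · simpa [hcm] using hyz
    · intro i hi j hj hij
      simp only [Set.mem_Iio, Nat.lt_succ_iff] at hi hj
      simp only [hi, hj, if_true] at hij
      by_contra hne
      wlog hlt : i < j generalizing i j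
      · exact this hj hi hij.symm (Ne.symm hne) (by omega)
      rcases hj.lt_or_eq with hjm | rfl
      · exact hne (hinj (by simp; omega) (by simp; omega) hij)
      · exact hfirst i hlt (hij.trans hcm)

theorem stmt_14 {S : Type} {ar : S → ℕ}
    (E F : Set (GTerm S ar × GTerm S ar)) (hEfin : E.Finite) (hFfin : F.Finite)
    (a b : Set (GTerm S ar))
    (hb : b ∈ CCl (E ∪ F) (STSet (E ∪ F)))
    (hreach : ReachesPE (RRsys (E ∪ F) (STSet (E ∪ F))) a b) :
    ∃ (k : ℕ) (hk : 1 ≤ k), k ≤ (CCl (E ∪ F) (STSet (E ∪ F))).ncard ∧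
      ∃ (σ : Fin k → S)
        (args : (j : Fin k) → Fin (ar (σ j)) → Set (GTerm S ar))
        (rhs : Fin k → Set (GTerm S ar))
        (idx : (j : Fin k) → Fin (ar (σ j))),
        (∀ j, 1 ≤ ar (σ j)) ∧
        (∀ j, (XTerm.node (σ j) (fun i => XTerm.const (args j i)),
               XTerm.const (rhs j)) ∈ RRsys (E ∪ F) (STSet (E ∪ F))) ∧
        args ⟨0, by omega⟩ (idx ⟨0, by omega⟩) = b ∧
        (∀ (j : ℕ) (hj : j + 1 < k),
          rhs ⟨j, by omega⟩ = args ⟨j + 1, hj⟩ (idx ⟨j + 1, hj⟩)) ∧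
        (∀ j : Fin k, (j : ℕ) < k - 1 → rhs j ≠ b) ∧
        (∀ i j : Fin k, (i : ℕ) < (j : ℕ) → (j : ℕ) < k - 1 → rhs i ≠ rhs j) ∧
        rhs ⟨k - 1, by omega⟩ = a := by
  obtain ⟨t, hpe, hred⟩ := hreach
  obtain ⟨k, c, hk, hc0, hck, hchain, hinj⟩ :=
    (transGen_auxArc_of_properExt (isFlat_RRsys _ _) hpe hred).exists_injOn_chain
  have hmem : ∀ j ∈ Set.Iio k, c j ∈ CCl (E ∪ F) (STSet (E ∪ F)) := by
    rintro (_ | j) hj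
    · exact hc0 ▸ hb
    · obtain ⟨σ, av, i, hrule, -⟩ := hchain j (by simp at hj; omega)
      exact mem_CCl_of_mem_RRsys hrule
  have hcard : k ≤ (CCl (E ∪ F) (STSet (E ∪ F))).ncard := by
    simpa using Set.ncard_le_ncard_of_injOn c hmem hinj
      (finite_CCl _ (finite_STSet (hEfin.union hFfin)))
  choose σ args idx hrule hargs using fun j : Fin k => hchain j j.isLt
  refine ⟨k, hk, hcard, σ, args, fun j => c (j + 1), idx, fun j => (idx j).pos, hrule,
    (hargs _).trans hc0, fun j hj => (hargs ⟨j + 1, hj⟩).symm, ?_, ?_, ?_⟩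
  · intro j hj
    exact hc0 ▸ hinj.ne (by simp; omega) (by simp; omega) (by omega)
  · intro i j hij hj
    exact hinj.ne (by simp; omega) (by simp; omega) (by omega)
  · simpa [Nat.sub_add_cancel hk] using hck
end
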